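/- Under the fixed effects ES model (φ = 0), if the prior standard deviation ω_p for SNP p is chosen as ω_p = K·ζ_p for a fixed constant K > 0, then ABF_fix^ES(ω_p) = (1+K²)^{−1/2}·exp((𝒯²_p/2)·K²/(1+K²)) is a strictly increasing function of 𝒯²_p not depending on ζ_p; hence ranking SNPs by ABF_fix^ES coincides with ranking by the test statistic 𝒯²_p. -/

import Mathlib

open Real

/-- Fixed-effects single-study approximate Bayes Factor with prior sd `ω`. -/
noncomputable def ABFfix (T2 zeta omega : ℝ) : ℝ :=
  Real.sqrt (zeta ^ 2 / (zeta ^ 2 + omega ^ 2)) *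
    Real.exp (T2 / 2 * (omega ^ 2 / (zeta ^ 2 + omega ^ 2)))

noncomputable def scaledPriorABF (K T2 : ℝ) : ℝ :=
  (1 + K ^ 2) ^ (-(1 / 2 : ℝ)) * Real.exp (T2 / 2 * (K ^ 2 / (1 + K ^ 2)))

lemma ABFfix_mul_self_eq (K T2 : ℝ) {zeta : ℝ} (hzeta : zeta ≠ 0) :
    ABFfix T2 zeta (K * zeta) = scaledPriorABF K T2 := by
  have hvar : zeta ^ 2 + (K * zeta) ^ 2 = zeta ^ 2 * (1 + K ^ 2) := by ring
  have hshrink : zeta ^ 2 / (zeta ^ 2 + (K * zeta) ^ 2) = (1 + K ^ 2)⁻¹ := by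
    rw [hvar]; field_simp
  have hweight : (K * zeta) ^ 2 / (zeta ^ 2 + (K * zeta) ^ 2) = K ^ 2 / (1 + K ^ 2) := by
    rw [hvar]; field_simp
  rw [ABFfix, scaledPriorABF, hshrink, hweight, Real.sqrt_inv, Real.sqrt_eq_rpow,
    Real.rpow_neg (by positivity)]

lemma scaledPriorABF_strictMono {K : ℝ} (hK : K ≠ 0) : StrictMono (scaledPriorABF K) := by
  have hweight : 0 < K ^ 2 / (1 + K ^ 2) := by positivity
  intro s t hst
  unfold scaledPriorABF
  gcongr

/-- Implicit p-value prior (fixed effects): with `ω_p = K ζ_p`, the fixed-effects ABF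
equals `(1+K²)^(−1/2)·exp((𝒯²/2)·K²/(1+K²))`, which does not depend on `ζ_p` and is
strictly increasing in `𝒯²`; hence ABF and `𝒯²` rank SNPs identically. -/
theorem implicit_pvalue_prior_fixed_effects (K : ℝ) (hK : 0 < K) :
    (∀ zeta T2 : ℝ, 0 < zeta → 0 ≤ T2 →
      ABFfix T2 zeta (K * zeta) =
        (1 + K ^ 2) ^ (-(1 / 2 : ℝ)) * Real.exp (T2 / 2 * (K ^ 2 / (1 + K ^ 2)))) ∧
    (∀ zetap zetaq T2p T2q : ℝ, 0 < zetap → 0 < zetaq → 0 ≤ T2p → 0 ≤ T2q →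
      (ABFfix T2p zetap (K * zetap) ≥ ABFfix T2q zetaq (K * zetaq) ↔ T2p ≥ T2q)) := by
  refine ⟨fun zeta T2 hzeta _ => ABFfix_mul_self_eq K T2 hzeta.ne', ?_⟩
  intro zetap zetaq T2p T2q hzetap hzetaq _ _
  rw [ABFfix_mul_self_eq K T2p hzetap.ne', ABFfix_mul_self_eq K T2q hzetaq.ne']
  exact (scaledPriorABF_strictMono hK.ne').le_iff_le
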